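/- Angle for weighted padding vectors. Let a, b ∈ ℝ^d be nonzero vectors and let w = (w₁,…,w_d) be a weight collection with each w_i ∈ ℝ^{p_i} nonzero. Then (min_{i∈[d]}‖w_i‖ / max_{i∈[d]}‖w_i‖)·sin(a, b) ≤ sin(Pad_w(a), Pad_w(b)) ≤ (max_{i∈[d]}‖w_i‖ / min_{i∈[d]}‖w_i‖)·sin(a, b). -/

import Mathlib

open scoped BigOperators

noncomputable section
set_option maxHeartbeats 1000000

/-- Normalization `v^s := v/‖v‖`, with the convention `0^s = 0`. -/
def nzd {ι : Type*} [Fintype ι] (v : EuclideanSpace ℝ ι) : EuclideanSpace ℝ ι :=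
  ‖v‖⁻¹ • v

/-- Cosine of the angle between two vectors. -/
def cosAngle {ι : Type*} [Fintype ι] (v w : EuclideanSpace ℝ ι) : ℝ :=
  (@inner ℝ _ _ v w) / (‖v‖ * ‖w‖)

/-- Sine of the angle between two vectors. -/
def sinAngle {ι : Type*} [Fintype ι] (v w : EuclideanSpace ℝ ι) : ℝ :=
  Real.sqrt (1 - (cosAngle v w) ^ 2)

/-- Weighted padding: `Pad_w(a)` is the concatenation of the blocks `a₁w₁, …, a_d w_d`. -/
def pad {d : ℕ} {pd : Fin d → ℕ}
    (w : (i : Fin d) → EuclideanSpace ℝ (Fin (pd i)))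
    (a : EuclideanSpace ℝ (Fin d)) :
    EuclideanSpace ℝ ((i : Fin d) × Fin (pd i)) :=
  WithLp.toLp 2 (fun it : (i : Fin d) × Fin (pd i) => a it.1 * w it.1 it.2)


lemma esq {ι : Type*} [Fintype ι] (x : EuclideanSpace ℝ ι) : ‖x‖^2 = ∑ i, x i * x i := by
  rw [← real_inner_self_eq_norm_sq]
  simp only [PiLp.inner_apply, RCLike.inner_apply, conj_trivial]

lemma einner {ι : Type*} [Fintype ι] (x y : EuclideanSpace ℝ ι) : @inner ℝ _ _ x y = ∑ i, x i * y i := by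
  simp [PiLp.inner_apply, RCLike.inner_apply, mul_comm]

lemma expand_norm_sub_sq {d : ℕ} (x y : EuclideanSpace ℝ (Fin d)) (t : ℝ) :
    ‖y - t • x‖^2 = ‖y‖^2 - 2 * t * @inner ℝ _ _ x y + t^2 * ‖x‖^2 := by
  rw [norm_sub_sq_real, real_inner_smul_right, norm_smul, Real.norm_eq_abs, mul_pow, sq_abs,
    real_inner_comm y x]
  ring

lemma key_ineq {d : ℕ} (a b : EuclideanSpace ℝ (Fin d)) (D : Fin d → ℝ) (m M : ℝ)
    (hm : 0 < m) (hlo : ∀ i, m ≤ D i) (hhi : ∀ i, D i ≤ M)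
    (ha : a ≠ 0) (hb : b ≠ 0) :
    sinAngle (WithLp.toLp 2 (fun i => D i * a i) : EuclideanSpace ℝ (Fin d))
      (WithLp.toLp 2 (fun i => D i * b i) : EuclideanSpace ℝ (Fin d)) ≤ (M / m) * sinAngle a b := by
  have hd : Nonempty (Fin d) := by
    by_contra h
    exact ha (PiLp.ext fun i => ((h ⟨i⟩).elim))
  obtain ⟨i0⟩ := hd
  have hM : 0 < M := lt_of_lt_of_le hm ((hlo i0).trans (hhi i0))
  set u : EuclideanSpace ℝ (Fin d) := WithLp.toLp 2 (fun i => D i * a i) with hu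
  set v : EuclideanSpace ℝ (Fin d) := WithLp.toLp 2 (fun i => D i * b i) with hv
  have hPa : (0:ℝ) < ‖a‖^2 := pow_pos (norm_pos_iff.mpr ha) 2
  have hPb : (0:ℝ) < ‖b‖^2 := pow_pos (norm_pos_iff.mpr hb) 2
  have hmu : m^2 * ‖a‖^2 ≤ ‖u‖^2 := by
    rw [esq, esq, Finset.mul_sum]
    apply Finset.sum_le_sum
    intro i _
    have h1 := hlo i
    have hsq : m^2 ≤ (D i)^2 := pow_le_pow_left₀ hm.le h1 2
    calc m^2 * (a i * a i) ≤ (D i)^2 * (a i * a i) :=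
          mul_le_mul_of_nonneg_right hsq (mul_self_nonneg _)
      _ = (D i * a i) * (D i * a i) := by ring
  have hmv : m^2 * ‖b‖^2 ≤ ‖v‖^2 := by
    rw [esq, esq, Finset.mul_sum]
    apply Finset.sum_le_sum
    intro i _
    have h1 := hlo i
    have hsq : m^2 ≤ (D i)^2 := pow_le_pow_left₀ hm.le h1 2
    calc m^2 * (b i * b i) ≤ (D i)^2 * (b i * b i) :=
          mul_le_mul_of_nonneg_right hsq (mul_self_nonneg _)
      _ = (D i * b i) * (D i * b i) := by ring
  have hPu : (0:ℝ) < ‖u‖^2 := lt_of_lt_of_le (by positivity) hmu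
  have hPv : (0:ℝ) < ‖v‖^2 := lt_of_lt_of_le (by positivity) hmv
  set t : ℝ := @inner ℝ _ _ a b / ‖a‖^2 with ht
  have hB : ‖a‖^2 * ‖b‖^2 - (@inner ℝ _ _ a b)^2 = ‖a‖^2 * ‖b - t • a‖^2 := by
    rw [expand_norm_sub_sq, ht]
    field_simp
    ring
  have hA : ‖u‖^2 * ‖v‖^2 - (@inner ℝ _ _ u v)^2 ≤ ‖u‖^2 * ‖v - t • u‖^2 := by
    rw [expand_norm_sub_sq]
    nlinarith [sq_nonneg (t * ‖u‖^2 - @inner ℝ _ _ u v)]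
  have hC : ‖v - t • u‖^2 ≤ M^2 * ‖b - t • a‖^2 := by
    rw [esq, esq, Finset.mul_sum]
    apply Finset.sum_le_sum
    intro i _
    have h1 := hlo i
    have h2 := hhi i
    have ev : (v - t • u) i = D i * (b i - t * a i) := by
      rw [PiLp.sub_apply, PiLp.smul_apply, smul_eq_mul]
      show D i * b i - t * (D i * a i) = _
      ring
    have ea : (b - t • a) i = b i - t * a i := by
      rw [PiLp.sub_apply, PiLp.smul_apply, smul_eq_mul]
    rw [ev, ea]
    have hsq : (D i)^2 ≤ M^2 := pow_le_pow_left₀ (hm.le.trans h1) h2 2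
    calc D i * (b i - t * a i) * (D i * (b i - t * a i))
        = (D i)^2 * ((b i - t * a i) * (b i - t * a i)) := by ring
      _ ≤ M^2 * ((b i - t * a i) * (b i - t * a i)) :=
          mul_le_mul_of_nonneg_right hsq (mul_self_nonneg _)
  -- combine
  have hNab : (0:ℝ) ≤ ‖a‖^2 * ‖b‖^2 - (@inner ℝ _ _ a b)^2 := by
    rw [hB]; positivity
  have h1 : (‖u‖^2 * ‖v‖^2 - (@inner ℝ _ _ u v)^2) * ‖a‖^2
      ≤ M^2 * (‖a‖^2 * ‖b‖^2 - (@inner ℝ _ _ a b)^2) * ‖u‖^2 := by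
    have s1 : ‖u‖^2 * ‖v‖^2 - (@inner ℝ _ _ u v)^2 ≤ ‖u‖^2 * (M^2 * ‖b - t • a‖^2) :=
      hA.trans (mul_le_mul_of_nonneg_left hC hPu.le)
    calc (‖u‖^2 * ‖v‖^2 - (@inner ℝ _ _ u v)^2) * ‖a‖^2
        ≤ (‖u‖^2 * (M^2 * ‖b - t • a‖^2)) * ‖a‖^2 := mul_le_mul_of_nonneg_right s1 hPa.le
      _ = M^2 * (‖a‖^2 * ‖b - t • a‖^2) * ‖u‖^2 := by ring
      _ = M^2 * (‖a‖^2 * ‖b‖^2 - (@inner ℝ _ _ a b)^2) * ‖u‖^2 := by rw [← hB]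
  have h2 : (‖u‖^2 * ‖v‖^2 - (@inner ℝ _ _ u v)^2) * (m^2 * (‖a‖^2 * ‖b‖^2))
      ≤ M^2 * (‖a‖^2 * ‖b‖^2 - (@inner ℝ _ _ a b)^2) * (‖u‖^2 * ‖v‖^2) := by
    calc (‖u‖^2 * ‖v‖^2 - (@inner ℝ _ _ u v)^2) * (m^2 * (‖a‖^2 * ‖b‖^2))
        = ((‖u‖^2 * ‖v‖^2 - (@inner ℝ _ _ u v)^2) * ‖a‖^2) * (m^2 * ‖b‖^2) := by ring
      _ ≤ (M^2 * (‖a‖^2 * ‖b‖^2 - (@inner ℝ _ _ a b)^2) * ‖u‖^2) * (m^2 * ‖b‖^2) :=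
          mul_le_mul_of_nonneg_right h1 (by positivity)
      _ = (M^2 * (‖a‖^2 * ‖b‖^2 - (@inner ℝ _ _ a b)^2) * ‖u‖^2) * (m^2 * ‖b‖^2) := rfl
      _ ≤ (M^2 * (‖a‖^2 * ‖b‖^2 - (@inner ℝ _ _ a b)^2) * ‖u‖^2) * ‖v‖^2 :=
          mul_le_mul_of_nonneg_left hmv (by positivity)
      _ = M^2 * (‖a‖^2 * ‖b‖^2 - (@inner ℝ _ _ a b)^2) * (‖u‖^2 * ‖v‖^2) := by ring
  -- squared sine inequality
  have hcos : 1 - cosAngle u v ^ 2 ≤ (M/m)^2 * (1 - cosAngle a b ^ 2) := by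
    have euv : cosAngle u v ^ 2 = (@inner ℝ _ _ u v)^2 / (‖u‖^2 * ‖v‖^2) := by
      rw [cosAngle, div_pow, mul_pow]
    have eab : cosAngle a b ^ 2 = (@inner ℝ _ _ a b)^2 / (‖a‖^2 * ‖b‖^2) := by
      rw [cosAngle, div_pow, mul_pow]
    rw [euv, eab]
    have e1 : 1 - (@inner ℝ _ _ u v)^2 / (‖u‖^2 * ‖v‖^2)
        = (‖u‖^2 * ‖v‖^2 - (@inner ℝ _ _ u v)^2) / (‖u‖^2 * ‖v‖^2) := by
      rw [one_sub_div (mul_pos hPu hPv).ne']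
    have e2 : (M/m)^2 * (1 - (@inner ℝ _ _ a b)^2 / (‖a‖^2 * ‖b‖^2))
        = (M^2 * (‖a‖^2 * ‖b‖^2 - (@inner ℝ _ _ a b)^2)) / (m^2 * (‖a‖^2 * ‖b‖^2)) := by
      field_simp
    rw [e1, e2, div_le_div_iff₀ (by positivity) (by positivity)]
    linarith [h2]
  -- take square roots
  have hcos_ab : (0:ℝ) ≤ 1 - cosAngle a b ^ 2 := by
    have eab : cosAngle a b ^ 2 = (@inner ℝ _ _ a b)^2 / (‖a‖^2 * ‖b‖^2) := by
      rw [cosAngle, div_pow, mul_pow]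
    rw [eab]
    rw [sub_nonneg, div_le_one (by positivity)]
    linarith [hNab]
  calc sinAngle u v = Real.sqrt (1 - cosAngle u v ^ 2) := rfl
    _ ≤ Real.sqrt ((M/m)^2 * (1 - cosAngle a b ^ 2)) := Real.sqrt_le_sqrt hcos
    _ = (M/m) * Real.sqrt (1 - cosAngle a b ^ 2) := by
        rw [Real.sqrt_mul (sq_nonneg _), Real.sqrt_sq (by positivity)]
    _ = (M/m) * sinAngle a b := rfl


lemma key_ineq_ge {d : ℕ} (a b : EuclideanSpace ℝ (Fin d)) (D : Fin d → ℝ) (m M : ℝ)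
    (hm : 0 < m) (hlo : ∀ i, m ≤ D i) (hhi : ∀ i, D i ≤ M)
    (ha : a ≠ 0) (hb : b ≠ 0) :
    (m / M) * sinAngle a b ≤
      sinAngle (WithLp.toLp 2 (fun i => D i * a i) : EuclideanSpace ℝ (Fin d))
        (WithLp.toLp 2 (fun i => D i * b i) : EuclideanSpace ℝ (Fin d)) := by
  have hd : Nonempty (Fin d) := by
    by_contra h
    exact ha (PiLp.ext fun i => ((h ⟨i⟩).elim))
  obtain ⟨i0⟩ := hd
  have hM : 0 < M := lt_of_lt_of_le hm ((hlo i0).trans (hhi i0))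
  have hDpos : ∀ i, 0 < D i := fun i => hm.trans_le (hlo i)
  have nz : ∀ (x : EuclideanSpace ℝ (Fin d)), x ≠ 0 →
      (WithLp.toLp 2 (fun i => D i * x i) : EuclideanSpace ℝ (Fin d)) ≠ 0 := by
    intro x hx h
    apply hx
    ext i
    have h2 : D i * x i = 0 := congrArg (fun z : EuclideanSpace ℝ (Fin d) => z i) h
    rcases mul_eq_zero.mp h2 with h3 | h3
    · exact absurd h3 (hDpos i).ne'
    · exact h3
  have hres := key_ineq (WithLp.toLp 2 (fun i => D i * a i) : EuclideanSpace ℝ (Fin d))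
    (WithLp.toLp 2 (fun i => D i * b i) : EuclideanSpace ℝ (Fin d)) (fun i => (D i)⁻¹) M⁻¹ m⁻¹
    (by positivity) (fun i => inv_anti₀ (hDpos i) (hhi i))
    (fun i => inv_anti₀ hm (hlo i)) (nz a ha) (nz b hb)
  have ea : (WithLp.toLp 2 (fun i => (D i)⁻¹ * ((WithLp.toLp 2 (fun j => D j * a j) : EuclideanSpace ℝ (Fin d)) i))
      : EuclideanSpace ℝ (Fin d)) = a := by
    ext i
    exact inv_mul_cancel_left₀ (hDpos i).ne' (a i)
  have eb : (WithLp.toLp 2 (fun i => (D i)⁻¹ * ((WithLp.toLp 2 (fun j => D j * b j) : EuclideanSpace ℝ (Fin d)) i))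
      : EuclideanSpace ℝ (Fin d)) = b := by
    ext i
    exact inv_mul_cancel_left₀ (hDpos i).ne' (b i)
  rw [ea, eb] at hres
  have hq : m⁻¹ / M⁻¹ = M / m := by
    field_simp
  rw [hq] at hres
  have h2 := mul_le_mul_of_nonneg_left hres (by positivity : (0:ℝ) ≤ m / M)
  calc (m / M) * sinAngle a b
      ≤ (m / M) * ((M / m) * sinAngle (WithLp.toLp 2 (fun i => D i * a i) : EuclideanSpace ℝ (Fin d))
          (WithLp.toLp 2 (fun i => D i * b i) : EuclideanSpace ℝ (Fin d))) := h2
    _ = sinAngle (WithLp.toLp 2 (fun i => D i * a i) : EuclideanSpace ℝ (Fin d))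
          (WithLp.toLp 2 (fun i => D i * b i) : EuclideanSpace ℝ (Fin d)) := by
        field_simp



lemma pad_inner {d : ℕ} {pd : Fin d → ℕ}
    (w : (i : Fin d) → EuclideanSpace ℝ (Fin (pd i)))
    (a b : EuclideanSpace ℝ (Fin d)) :
    @inner ℝ _ _ (pad w a) (pad w b)
      = @inner ℝ (EuclideanSpace ℝ (Fin d)) _ (WithLp.toLp 2 (fun i => ‖w i‖ * a i))
          (WithLp.toLp 2 (fun i => ‖w i‖ * b i)) := by
  rw [einner, einner, ← Finset.univ_sigma_univ, Finset.sum_sigma]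
  apply Finset.sum_congr rfl
  intro i _
  have hwi : ∑ j, w i j * w i j = ‖w i‖^2 := (esq (w i)).symm
  calc ∑ j, pad w a ⟨i, j⟩ * pad w b ⟨i, j⟩
      = ∑ j, (a i * b i) * (w i j * w i j) := by
        apply Finset.sum_congr rfl
        intro j _
        show (a i * w i j) * (b i * w i j) = _
        ring
    _ = (a i * b i) * ∑ j, w i j * w i j := by rw [Finset.mul_sum]
    _ = (a i * b i) * ‖w i‖^2 := by rw [hwi]
    _ = (‖w i‖ * a i) * (‖w i‖ * b i) := by ring

lemma pad_sin {d : ℕ} {pd : Fin d → ℕ}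
    (w : (i : Fin d) → EuclideanSpace ℝ (Fin (pd i)))
    (a b : EuclideanSpace ℝ (Fin d)) :
    sinAngle (pad w a) (pad w b)
      = sinAngle (WithLp.toLp 2 (fun i => ‖w i‖ * a i) : EuclideanSpace ℝ (Fin d))
          (WithLp.toLp 2 (fun i => ‖w i‖ * b i) : EuclideanSpace ℝ (Fin d)) := by
  set u : EuclideanSpace ℝ (Fin d) := WithLp.toLp 2 (fun i => ‖w i‖ * a i) with hu
  set v : EuclideanSpace ℝ (Fin d) := WithLp.toLp 2 (fun i => ‖w i‖ * b i) with hv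
  have hinner : @inner ℝ _ _ (pad w a) (pad w b) = @inner ℝ _ _ u v := pad_inner w a b
  have hna : ‖pad w a‖ = ‖u‖ := by
    have h2 : @inner ℝ _ _ (pad w a) (pad w a) = @inner ℝ _ _ u u := pad_inner w a a
    rw [real_inner_self_eq_norm_sq, real_inner_self_eq_norm_sq] at h2
    calc ‖pad w a‖ = Real.sqrt (‖pad w a‖^2) := (Real.sqrt_sq (norm_nonneg _)).symm
      _ = Real.sqrt (‖u‖^2) := by rw [h2]
      _ = ‖u‖ := Real.sqrt_sq (norm_nonneg _)
  have hnb : ‖pad w b‖ = ‖v‖ := by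
    have h2 : @inner ℝ _ _ (pad w b) (pad w b) = @inner ℝ _ _ v v := pad_inner w b b
    rw [real_inner_self_eq_norm_sq, real_inner_self_eq_norm_sq] at h2
    calc ‖pad w b‖ = Real.sqrt (‖pad w b‖^2) := (Real.sqrt_sq (norm_nonneg _)).symm
      _ = Real.sqrt (‖v‖^2) := by rw [h2]
      _ = ‖v‖ := Real.sqrt_sq (norm_nonneg _)
  unfold sinAngle cosAngle
  rw [hinner, hna, hnb]


/-- Angle for weighted padding vectors, Lemma 4.  For nonzero `a, b`
and nonzero weights `w_i`,
`(min‖w_i‖/max‖w_i‖)·sin(a,b) ≤ sin(Pad_w(a), Pad_w(b)) ≤ (max‖w_i‖/min‖w_i‖)·sin(a,b)`. -/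
theorem padding_angle_bounds {d : ℕ} {pd : Fin d → ℕ}
    (a b : EuclideanSpace ℝ (Fin d)) (ha : a ≠ 0) (hb : b ≠ 0)
    (w : (i : Fin d) → EuclideanSpace ℝ (Fin (pd i))) (hw : ∀ i, w i ≠ 0) :
    (sInf (Set.range fun i => ‖w i‖) / sSup (Set.range fun i => ‖w i‖)) * sinAngle a b
        ≤ sinAngle (pad w a) (pad w b) ∧
    sinAngle (pad w a) (pad w b)
        ≤ (sSup (Set.range fun i => ‖w i‖) / sInf (Set.range fun i => ‖w i‖))
            * sinAngle a b := by
  have hd : Nonempty (Fin d) := by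
    by_contra h
    exact ha (PiLp.ext fun i => ((h ⟨i⟩).elim))
  set m := sInf (Set.range fun i => ‖w i‖) with hmdef
  set M := sSup (Set.range fun i => ‖w i‖) with hMdef
  have hfin : (Set.range fun i => ‖w i‖).Finite := Set.finite_range _
  have hne : (Set.range fun i => ‖w i‖).Nonempty := Set.range_nonempty _
  obtain ⟨i0, hi0⟩ := hne.csInf_mem hfin
  have hm : 0 < m := by
    rw [hmdef, ← hi0]
    exact norm_pos_iff.mpr (hw i0)
  have hlo : ∀ i, m ≤ ‖w i‖ := fun i => csInf_le hfin.bddBelow ⟨i, rfl⟩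
  have hhi : ∀ i, ‖w i‖ ≤ M := fun i => le_csSup hfin.bddAbove ⟨i, rfl⟩
  rw [pad_sin]
  exact ⟨key_ineq_ge a b (fun i => ‖w i‖) m M hm hlo hhi ha hb,
    key_ineq a b (fun i => ‖w i‖) m M hm hlo hhi ha hb⟩
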